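/- arXiv:1706.02910 — 6 statements merged into one kernel-verified Lean document; each statement's English description precedes it below -/
import Mathlib

section
/- Every sequentiable structure satisfies the right cancellation property: for all a, b, c ∈ M, if a∘c = b∘c then a = b. -/
/-!
Write `a = m * a'` and `b = m * b'` with `m = a ⊓ b`. Left cancellation turns `a * c = b * c`
into `a' * c = b' * c`, and the norm forces `a' ⊓ b' = 1`. If `a'` or `b'` is the identity, the
norm shows that both are. Otherwise the sequentiability axiom lifts `a' ⊓ b' = 1` to
`(a' * c) ⊓ (b' * c) = 1`; but these two elements are equal and nonidentity, and `x ≤ x ⊓ x`.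
-/

/-- The prefix relation in a monoid: `a ≤ b` iff `∃ c, a * c = b`. -/
def pref {M : Type*} [Monoid M] (a b : M) : Prop := ∃ c, a * c = b

namespace Sequentiable

variable {M : Type*} [Monoid M] {norm : M → ℝ} {meet : M → M → M}

theorem pref_refl (a : M) : pref a a := ⟨1, mul_one a⟩

theorem pref_mul_right (a b : M) : pref a (a * b) := ⟨b, rfl⟩

theorem pref_mul_left {a b : M} (c : M) (h : pref a b) : pref (c * a) (c * b) :=
  let ⟨d, hd⟩ := h
  ⟨d, by rw [mul_assoc, hd]⟩

theorem eq_one_of_mul_eq_left (hmul : ∀ a b : M, norm (a * b) = norm a + norm b)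
    (hker : ∀ a : M, norm a = 0 → a = 1) {a b : M} (h : a * b = a) : b = 1 :=
  hker b (by linarith [hmul a b, congrArg norm h])

theorem eq_one_of_mul_eq_right (hmul : ∀ a b : M, norm (a * b) = norm a + norm b)
    (hker : ∀ a : M, norm a = 0 → a = 1) {a b : M} (h : a * b = b) : a = 1 :=
  hker a (by linarith [hmul a b, congrArg norm h])

theorem left_eq_one_of_mul_eq_one (hnn : ∀ a : M, 0 ≤ norm a)
    (hmul : ∀ a b : M, norm (a * b) = norm a + norm b)
    (hker : ∀ a : M, norm a = 0 → a = 1) {a b : M} (h : a * b = 1) : a = 1 :=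
  have hone : norm 1 = 0 := by linarith [hmul 1 1, congrArg norm (mul_one (1 : M))]
  hker a (by linarith [hmul a b, congrArg norm h, hnn a, hnn b])

theorem meet_cofactors_eq_one (hnn : ∀ a : M, 0 ≤ norm a)
    (hmul : ∀ a b : M, norm (a * b) = norm a + norm b)
    (hker : ∀ a : M, norm a = 0 → a = 1)
    (hm1 : ∀ a b : M, pref (meet a b) a) (hm2 : ∀ a b : M, pref (meet a b) b)
    (hm3 : ∀ a b c : M, pref c a → pref c b → pref c (meet a b))
    {a b a' b' : M} (ha : meet a b * a' = a) (hb : meet a b * b' = b) : meet a' b' = 1 := by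
  have hpref_a := pref_mul_left (meet a b) (hm1 a' b')
  have hpref_b := pref_mul_left (meet a b) (hm2 a' b')
  rw [ha] at hpref_a
  rw [hb] at hpref_b
  obtain ⟨e, he⟩ := hm3 a b _ hpref_a hpref_b
  rw [mul_assoc] at he
  exact left_eq_one_of_mul_eq_one hnn hmul hker (eq_one_of_mul_eq_left hmul hker he)

theorem eq_one_of_meet_self_eq_one (hnn : ∀ a : M, 0 ≤ norm a)
    (hmul : ∀ a b : M, norm (a * b) = norm a + norm b)
    (hker : ∀ a : M, norm a = 0 → a = 1)
    (hm3 : ∀ a b c : M, pref c a → pref c b → pref c (meet a b))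
    {a : M} (h : meet a a = 1) : a = 1 :=
  let ⟨_, he⟩ := hm3 a a a (pref_refl a) (pref_refl a)
  left_eq_one_of_mul_eq_one hnn hmul hker (he.trans h)

theorem eq_of_mul_eq_mul_right_of_meet_eq_one (hnn : ∀ a : M, 0 ≤ norm a)
    (hmul : ∀ a b : M, norm (a * b) = norm a + norm b)
    (hker : ∀ a : M, norm a = 0 → a = 1)
    (hm3 : ∀ a b c : M, pref c a → pref c b → pref c (meet a b))
    (hseq : ∀ a b c d : M, a ≠ 1 → b ≠ 1 → c ≠ 1 → d ≠ 1 →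
      pref a c → pref b d → meet a b = 1 → meet c d = 1)
    {a b c : M} (hab : meet a b = 1) (h : a * c = b * c) : a = b := by
  by_cases ha : a = 1
  · rw [ha, one_mul] at h
    exact ha.trans (eq_one_of_mul_eq_right hmul hker h.symm).symm
  by_cases hb : b = 1
  · rw [hb, one_mul] at h
    exact (eq_one_of_mul_eq_right hmul hker h).trans hb.symm
  have hac : a * c ≠ 1 := fun h' => ha (left_eq_one_of_mul_eq_one hnn hmul hker h')
  have hmeet := hseq a b (a * c) (b * c) ha hb hac (h ▸ hac)
    (pref_mul_right a c) (pref_mul_right b c) hab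
  rw [← h] at hmeet
  exact absurd (eq_one_of_meet_self_eq_one hnn hmul hker hm3 hmeet) hac

end Sequentiable

open Sequentiable in
theorem rightCancellation_general {M : Type*} [Monoid M]
    (norm : M → ℝ) (meet : M → M → M)
    (hlc : ∀ a b c : M, a * b = a * c → b = c)
    (hnn : ∀ a : M, 0 ≤ norm a)
    (hmul : ∀ a b : M, norm (a * b) = norm a + norm b)
    (hker : ∀ a : M, norm a = 0 → a = 1)
    (hm1 : ∀ a b : M, pref (meet a b) a)
    (hm2 : ∀ a b : M, pref (meet a b) b)
    (hm3 : ∀ a b c : M, pref c a → pref c b → pref c (meet a b))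
    (hseq : ∀ a b c d : M, a ≠ 1 → b ≠ 1 → c ≠ 1 → d ≠ 1 →
      pref a c → pref b d → meet a b = 1 → meet c d = 1) :
    ∀ a b c : M, a * c = b * c → a = b := by
  intro a b c h
  obtain ⟨a', ha⟩ := hm1 a b
  obtain ⟨b', hb⟩ := hm2 a b
  have hcancel : a' * c = b' * c := hlc _ _ _ (by rw [← mul_assoc, ← mul_assoc, ha, hb, h])
  have hcop : meet a' b' = 1 := meet_cofactors_eq_one hnn hmul hker hm1 hm2 hm3 ha hb
  calc a = meet a b * a' := ha.symm
    _ = meet a b * b' := by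
      rw [eq_of_mul_eq_mul_right_of_meet_eq_one hnn hmul hker hm3 hseq hcop hcancel]
    _ = b := hb

/-- Every sequentiable structure satisfies right cancellation. -/
theorem rightCancellation {M : Type*} [Monoid M]
    (norm : M → ℝ) (meet : M → M → M)
    (hlc : ∀ a b c : M, a * b = a * c → b = c)
    (hnn : ∀ a : M, 0 ≤ norm a)
    (hmul : ∀ a b : M, norm (a * b) = norm a + norm b)
    (hone : norm 1 = 0)
    (hker : ∀ a : M, norm a = 0 → a = 1)
    (hm1 : ∀ a b : M, pref (meet a b) a)
    (hm2 : ∀ a b : M, pref (meet a b) b)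
    (hm3 : ∀ a b c : M, pref c a → pref c b → pref c (meet a b))
    (hseq : ∀ a b c d : M, a ≠ 1 → b ≠ 1 → c ≠ 1 → d ≠ 1 →
      pref a c → pref b d → meet a b = 1 → meet c d = 1) :
    ∀ a b c : M, a * c = b * c → a = b :=
  rightCancellation_general norm meet hlc hnn hmul hker hm1 hm2 hm3 hseq
end

section
/- Sequentiable structures satisfy a Levi-type lemma: for all a₁, a₂, b₁, b₂ ∈ M, if a₁∘a₂ = b₁∘b₂ and ‖b₁‖ ≥ ‖a₁‖, then there exists c ∈ M with a₁∘c = b₁ and c∘b₂ = a₂. -/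
section Norm

variable {M : Type*} [Monoid M] {norm : M → ℝ}

lemma norm_one_of_map_mul (hmul : ∀ a b : M, norm (a * b) = norm a + norm b) : norm 1 = 0 := by
  have h := hmul 1 1
  rw [mul_one] at h
  linarith

lemma eq_of_pref_of_norm_le (hnn : ∀ a : M, 0 ≤ norm a)
    (hmul : ∀ a b : M, norm (a * b) = norm a + norm b) (hker : ∀ a : M, norm a = 0 → a = 1)
    {a b : M} (hba : pref b a) (hnorm : norm a ≤ norm b) : a = b := by
  obtain ⟨c, rfl⟩ := hba
  have hc : norm c = 0 := le_antisymm (by linarith [hmul b c]) (hnn c)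
  rw [hker c hc, mul_one]

lemma eq_one_of_pref_one (hnn : ∀ a : M, 0 ≤ norm a)
    (hmul : ∀ a b : M, norm (a * b) = norm a + norm b) (hker : ∀ a : M, norm a = 0 → a = 1)
    {a : M} (ha : pref a 1) : a = 1 :=
  (eq_of_pref_of_norm_le hnn hmul hker ha (by rw [norm_one_of_map_mul hmul]; exact hnn a)).symm

end Norm

section Meet

variable {M : Type*} [Monoid M] {norm : M → ℝ} {meet : M → M → M}

lemma pref_meet_self (hm3 : ∀ a b c : M, pref c a → pref c b → pref c (meet a b)) (a : M) :
    pref a (meet a a) :=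
  hm3 a a a ⟨1, mul_one a⟩ ⟨1, mul_one a⟩

lemma meet_eq_one_of_mul_meet (hlc : ∀ a b c : M, a * b = a * c → b = c)
    (hnn : ∀ a : M, 0 ≤ norm a) (hmul : ∀ a b : M, norm (a * b) = norm a + norm b)
    (hker : ∀ a : M, norm a = 0 → a = 1) (hm1 : ∀ a b : M, pref (meet a b) a)
    (hm2 : ∀ a b : M, pref (meet a b) b)
    (hm3 : ∀ a b c : M, pref c a → pref c b → pref c (meet a b))
    {a b a' b' : M} (ha : meet a b * a' = a) (hb : meet a b * b' = b) : meet a' b' = 1 := by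
  obtain ⟨x, hx⟩ := hm1 a' b'
  obtain ⟨y, hy⟩ := hm2 a' b'
  obtain ⟨z, hz⟩ := hm3 a b (meet a b * meet a' b')
    ⟨x, by rw [mul_assoc, hx, ha]⟩ ⟨y, by rw [mul_assoc, hy, hb]⟩
  refine eq_one_of_pref_one hnn hmul hker ⟨z, hlc (meet a b) _ _ ?_⟩
  rw [← mul_assoc, hz, mul_one]

lemma eq_one_or_eq_one_of_meet_eq_one (hnn : ∀ a : M, 0 ≤ norm a)
    (hmul : ∀ a b : M, norm (a * b) = norm a + norm b) (hker : ∀ a : M, norm a = 0 → a = 1)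
    (hm3 : ∀ a b c : M, pref c a → pref c b → pref c (meet a b))
    (hseq : ∀ a b c d : M, a ≠ 1 → b ≠ 1 → c ≠ 1 → d ≠ 1 →
      pref a c → pref b d → meet a b = 1 → meet c d = 1)
    {a b c d : M} (hmeet : meet a b = 1) (h : a * c = b * d) : a = 1 ∨ b = 1 := by
  by_contra! hab
  have ht : a * c ≠ 1 := fun ht => hab.1 (eq_one_of_pref_one hnn hmul hker ⟨c, ht⟩)
  have htt : meet (a * c) (a * c) = 1 :=
    hseq a b _ _ hab.1 hab.2 ht ht ⟨c, rfl⟩ ⟨d, h.symm⟩ hmeet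
  have hpref := pref_meet_self hm3 (a * c)
  rw [htt] at hpref
  exact ht (eq_one_of_pref_one hnn hmul hker hpref)

end Meet

theorem leviLemma_general {M : Type*} [Monoid M]
    (norm : M → ℝ) (meet : M → M → M)
    (hlc : ∀ a b c : M, a * b = a * c → b = c)
    (hnn : ∀ a : M, 0 ≤ norm a)
    (hmul : ∀ a b : M, norm (a * b) = norm a + norm b)
    (hker : ∀ a : M, norm a = 0 → a = 1)
    (hm1 : ∀ a b : M, pref (meet a b) a)
    (hm2 : ∀ a b : M, pref (meet a b) b)
    (hm3 : ∀ a b c : M, pref c a → pref c b → pref c (meet a b))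
    (hseq : ∀ a b c d : M, a ≠ 1 → b ≠ 1 → c ≠ 1 → d ≠ 1 →
      pref a c → pref b d → meet a b = 1 → meet c d = 1)
    (a₁ a₂ b₁ b₂ : M) (heq : a₁ * a₂ = b₁ * b₂) (hnorm : norm a₁ ≤ norm b₁) :
    ∃ c : M, a₁ * c = b₁ ∧ c * b₂ = a₂ := by
  obtain ⟨a', ha'⟩ := hm1 a₁ b₁
  obtain ⟨b', hb'⟩ := hm2 a₁ b₁
  have hcof : a' * a₂ = b' * b₂ :=
    hlc (meet a₁ b₁) _ _ (by rw [← mul_assoc, ← mul_assoc, ha', hb', heq])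
  have hmeet := meet_eq_one_of_mul_meet hlc hnn hmul hker hm1 hm2 hm3 ha' hb'
  rcases eq_one_or_eq_one_of_meet_eq_one hnn hmul hker hm3 hseq hmeet hcof with rfl | rfl
  · refine ⟨b', by rw [← ha', mul_one, hb'], ?_⟩
    rw [← hcof, one_mul]
  · have hab : a₁ = b₁ :=
      eq_of_pref_of_norm_le hnn hmul hker ⟨a', by rw [← hb', mul_one, ha']⟩ hnorm
    subst hab
    exact ⟨1, mul_one a₁, by rw [one_mul]; exact (hlc a₁ _ _ heq).symm⟩

/-- Levi-type lemma for sequentiable structures. -/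
theorem leviLemma {M : Type*} [Monoid M]
    (norm : M → ℝ) (meet : M → M → M)
    (hlc : ∀ a b c : M, a * b = a * c → b = c)
    (hnn : ∀ a : M, 0 ≤ norm a)
    (hmul : ∀ a b : M, norm (a * b) = norm a + norm b)
    (hone : norm 1 = 0)
    (hker : ∀ a : M, norm a = 0 → a = 1)
    (hm1 : ∀ a b : M, pref (meet a b) a)
    (hm2 : ∀ a b : M, pref (meet a b) b)
    (hm3 : ∀ a b c : M, pref c a → pref c b → pref c (meet a b))
    (hseq : ∀ a b c d : M, a ≠ 1 → b ≠ 1 → c ≠ 1 → d ≠ 1 →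
      pref a c → pref b d → meet a b = 1 → meet c d = 1)
    (a₁ a₂ b₁ b₂ : M) (heq : a₁ * a₂ = b₁ * b₂) (hnorm : norm a₁ ≤ norm b₁) :
    ∃ c : M, a₁ * c = b₁ ∧ c * b₂ = a₂ :=
  leviLemma_general norm meet hlc hnn hmul hker hm1 hm2 hm3 hseq a₁ a₂ b₁ b₂ heq hnorm
end

section
/- Let M be a sequentiable structure and f : Σ* → M a partial function with α ∈ Σ* f-essential and α ≡_{R_f} αβ. If (m₁, m₂, s) witnesses α ≡_{R_f} αβ, then m₁ ≤ m₂ in the prefix order of M. -/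
section NormedMonoid

variable {M : Type*} [Monoid M] {norm : M → ℝ}

theorem eq_one_of_mul_eq_one_of_norm (hnn : ∀ a : M, 0 ≤ norm a)
    (hmul : ∀ a b : M, norm (a * b) = norm a + norm b) (hone : norm 1 = 0)
    (hker : ∀ a : M, norm a = 0 → a = 1) {u v : M} (h : u * v = 1) : u = 1 := by
  have := hmul u v
  rw [h, hone] at this
  exact hker u (by linarith [hnn u, hnn v])

theorem eq_one_of_forall_eq_mul_succ (hnn : ∀ a : M, 0 ≤ norm a)
    (hmul : ∀ a b : M, norm (a * b) = norm a + norm b)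
    (hker : ∀ a : M, norm a = 0 → a = 1) {a : M} (t : ℕ → M)
    (ht : ∀ n, t n = a * t (n + 1)) : a = 1 := by
  have hnorm : ∀ n : ℕ, norm (t 0) = n * norm a + norm (t n) := by
    intro n
    induction n with
    | zero => simp
    | succ n ih => rw [ih, ht n, hmul]; push_cast; ring
  refine hker a (le_antisymm (not_lt.mp fun hpos => ?_) (hnn a))
  obtain ⟨n, hn⟩ := exists_nat_gt (norm (t 0) / norm a)
  rw [div_lt_iff₀ hpos] at hn
  linarith [hnorm n, hnn (t n)]

end NormedMonoid

section Meet

variable {M : Type*} [Monoid M] {meet : M → M → M}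

theorem pref_antisymm (hlc : ∀ a b c : M, a * b = a * c → b = c)
    (hunit : ∀ u v : M, u * v = 1 → u = 1) {p q : M} :
    pref p q → pref q p → p = q := by
  rintro ⟨u, rfl⟩ ⟨v, hv⟩
  have huv : u * v = 1 := hlc p _ _ (by rw [← mul_assoc, hv, mul_one])
  rw [hunit u v huv, mul_one]

theorem meet_self (hlc : ∀ a b c : M, a * b = a * c → b = c)
    (hunit : ∀ u v : M, u * v = 1 → u = 1) (hm1 : ∀ a b : M, pref (meet a b) a)
    (hm3 : ∀ a b c : M, pref c a → pref c b → pref c (meet a b)) (x : M) :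
    meet x x = x :=
  pref_antisymm hlc hunit (hm1 x x) (hm3 x x x ⟨1, mul_one x⟩ ⟨1, mul_one x⟩)

theorem meet_cofactors_eq_one (hlc : ∀ a b c : M, a * b = a * c → b = c)
    (hunit : ∀ u v : M, u * v = 1 → u = 1)
    (hm1 : ∀ a b : M, pref (meet a b) a) (hm2 : ∀ a b : M, pref (meet a b) b)
    (hm3 : ∀ a b c : M, pref c a → pref c b → pref c (meet a b)) {m₁ m₂ a b : M}
    (ha : meet m₁ m₂ * a = m₁) (hb : meet m₁ m₂ * b = m₂) : meet a b = 1 := by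
  obtain ⟨u, hu⟩ := hm1 a b
  obtain ⟨v, hv⟩ := hm2 a b
  obtain ⟨e, he⟩ := hm3 m₁ m₂ (meet m₁ m₂ * meet a b)
    ⟨u, by rw [mul_assoc, hu, ha]⟩ ⟨v, by rw [mul_assoc, hv, hb]⟩
  rw [mul_assoc] at he
  exact hunit _ e (hlc (meet m₁ m₂) _ _ (by rw [he, mul_one]))

theorem eq_one_or_eq_one_of_mul_eq_mul (hunit : ∀ u v : M, u * v = 1 → u = 1)
    (hmself : ∀ x : M, meet x x = x)
    (hseq : ∀ a b c d : M, a ≠ 1 → b ≠ 1 → c ≠ 1 → d ≠ 1 →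
      pref a c → pref b d → meet a b = 1 → meet c d = 1)
    {a b x y : M} (hab : meet a b = 1) (h : a * x = b * y) : a = 1 ∨ b = 1 := by
  by_contra! hne
  have hax : a * x ≠ 1 := mt (hunit a x) hne.1
  have hmeet := hseq a b (a * x) (a * x) hne.1 hne.2 hax hax ⟨x, rfl⟩ ⟨y, h.symm⟩ hab
  exact hax (by rwa [hmself] at hmeet)

end Meet

theorem pref_of_forall_mul_eq_mul_succ {M : Type*} [Monoid M] {norm : M → ℝ}
    {meet : M → M → M}
    (hlc : ∀ a b c : M, a * b = a * c → b = c)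
    (hnn : ∀ a : M, 0 ≤ norm a)
    (hmul : ∀ a b : M, norm (a * b) = norm a + norm b)
    (hone : norm 1 = 0)
    (hker : ∀ a : M, norm a = 0 → a = 1)
    (hm1 : ∀ a b : M, pref (meet a b) a)
    (hm2 : ∀ a b : M, pref (meet a b) b)
    (hm3 : ∀ a b c : M, pref c a → pref c b → pref c (meet a b))
    (hseq : ∀ a b c d : M, a ≠ 1 → b ≠ 1 → c ≠ 1 → d ≠ 1 →
      pref a c → pref b d → meet a b = 1 → meet c d = 1)
    {m₁ m₂ : M} (t : ℕ → M) (ht : ∀ n, m₂ * t n = m₁ * t (n + 1)) : pref m₁ m₂ := by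
  have hunit : ∀ u v : M, u * v = 1 → u = 1 := fun _ _ =>
    eq_one_of_mul_eq_one_of_norm hnn hmul hone hker
  obtain ⟨a, ha⟩ := hm1 m₁ m₂
  obtain ⟨b, hb⟩ := hm2 m₁ m₂
  have hab : ∀ n, b * t n = a * t (n + 1) := fun n =>
    hlc (meet m₁ m₂) _ _ (by rw [← mul_assoc, ← mul_assoc, ha, hb, ht])
  have hcoprime := meet_cofactors_eq_one hlc hunit hm1 hm2 hm3 ha hb
  suffices ha1 : a = 1 from ⟨b, by rw [← ha, ha1, mul_one, hb]⟩
  rcases eq_one_or_eq_one_of_mul_eq_mul hunit (meet_self hlc hunit hm1 hm3) hseq hcoprime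
    (hab 0).symm with ha1 | hb1
  · exact ha1
  · exact eq_one_of_forall_eq_mul_succ hnn hmul hker t fun n => by
      simpa only [hb1, one_mul] using hab n

theorem exists_mul_eq_mul_succ {A M : Type*} [Monoid M] (f : List A → Option M)
    (α β : List A) (hess : ∃ w : List A, (f (α ++ w)).isSome) (m₁ m₂ : M)
    (s : List A → Option M)
    (hdoms : ∀ w : List A, (s w).isSome ↔ (f (α ++ w)).isSome)
    (hdomeq : ∀ w : List A, (f (α ++ w)).isSome ↔ (f (α ++ β ++ w)).isSome)
    (hw1 : ∀ (w : List A) (t : M), s w = some t → f (α ++ w) = some (m₁ * t))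
    (hw2 : ∀ (w : List A) (t : M), s w = some t → f (α ++ β ++ w) = some (m₂ * t)) :
    ∃ t : ℕ → M, ∀ n, m₂ * t n = m₁ * t (n + 1) := by
  obtain ⟨w₀, hw₀⟩ := hess
  let W : ℕ → List A := fun n => (β ++ ·)^[n] w₀
  have hWsucc : ∀ n, α ++ W (n + 1) = α ++ β ++ W n := fun n => by
    simp only [W, Function.iterate_succ_apply', List.append_assoc]
  have hdomW : ∀ n, (s (W n)).isSome := by
    intro n
    induction n with
    | zero => exact (hdoms w₀).mpr hw₀
    | succ n ih => exact (hdoms _).mpr (hWsucc n ▸ (hdomeq _).mp ((hdoms _).mp ih))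
  choose t ht using fun n => Option.isSome_iff_exists.mp (hdomW n)
  refine ⟨t, fun n => Option.some.inj ?_⟩
  rw [← hw2 _ _ (ht n), ← hw1 _ _ (ht (n + 1)), hWsucc]

/-- If `α` is `f`-essential, `α ≡_{R_f} αβ`, and `(m₁, m₂, s)` witnesses this
equivalence, then `m₁ ≤ m₂` in the prefix order of the sequentiable structure. -/
theorem witnessPrefix {A : Type*} {M : Type*} [Monoid M]
    (norm : M → ℝ) (meet : M → M → M)
    (hlc : ∀ a b c : M, a * b = a * c → b = c)
    (hnn : ∀ a : M, 0 ≤ norm a)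
    (hmul : ∀ a b : M, norm (a * b) = norm a + norm b)
    (hone : norm 1 = 0)
    (hker : ∀ a : M, norm a = 0 → a = 1)
    (hm1 : ∀ a b : M, pref (meet a b) a)
    (hm2 : ∀ a b : M, pref (meet a b) b)
    (hm3 : ∀ a b c : M, pref c a → pref c b → pref c (meet a b))
    (hseq : ∀ a b c d : M, a ≠ 1 → b ≠ 1 → c ≠ 1 → d ≠ 1 →
      pref a c → pref b d → meet a b = 1 → meet c d = 1)
    (f : List A → Option M) (α β : List A)
    (hess : ∃ w : List A, (f (α ++ w)).isSome)
    (m₁ m₂ : M) (s : List A → Option M)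
    (hdoms : ∀ w : List A, (s w).isSome ↔ (f (α ++ w)).isSome)
    (hdomeq : ∀ w : List A, (f (α ++ w)).isSome ↔ (f (α ++ β ++ w)).isSome)
    (hw1 : ∀ (w : List A) (t : M), s w = some t → f (α ++ w) = some (m₁ * t))
    (hw2 : ∀ (w : List A) (t : M), s w = some t → f (α ++ β ++ w) = some (m₂ * t)) :
    pref m₁ m₂ := by
  obtain ⟨t, ht⟩ := exists_mul_eq_mul_succ f α β hess m₁ m₂ s hdoms hdomeq hw1 hw2
  exact pref_of_forall_mul_eq_mul_succ hlc hnn hmul hone hker hm1 hm2 hm3 hseq t ht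
end

section
/- With the hypotheses of the previous lemma, the norms satisfy ‖m₁‖ ≤ ‖m₂‖: if (m₁, m₂, s) witnesses α ≡_{R_f} αβ for an f-essential α, then for every N ≥ 1, N·(‖m₁‖ − ‖m₂‖) + ‖s(βᴺw)‖ = ‖s(w)‖ for any w with αw ∈ dom(f), and consequently ‖m₁‖ ≤ ‖m₂‖. -/
/-!
Reading `f (α ++ β ++ w)` through both halves of the witness gives `m₁ * s(βw) = m₂ * s(w)`, so
additivity of the norm yields `‖m₁‖ + ‖s(βw)‖ = ‖m₂‖ + ‖s(w)‖`. Iterating along `βᴺw` gives the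
identity `N·(‖m₁‖ − ‖m₂‖) + ‖s(βᴺw)‖ = ‖s(w)‖`; as the norms are nonnegative, `N·(‖m₁‖ − ‖m₂‖)`
stays below `‖s(w)‖` for every `N`, which forces `‖m₁‖ ≤ ‖m₂‖` once a single `w` is in the domain.
-/

def wordPow {A : Type*} (β : List A) : ℕ → List A
  | 0 => []
  | n + 1 => β ++ wordPow β n

theorem nonpos_of_forall_nsmul_le {R : Type*} [AddCommMonoid R] [LinearOrder R]
    [IsOrderedCancelAddMonoid R] [Archimedean R] {b c : R} (h : ∀ n : ℕ, n • c ≤ b) :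
    c ≤ 0 := by
  by_contra! hc
  obtain ⟨n, hn⟩ := Archimedean.arch b hc
  have hsucc : n • c + c ≤ n • c := succ_nsmul c n ▸ (h (n + 1)).trans hn
  exact (lt_add_of_pos_right _ hc).not_ge hsucc

theorem wordPow_succ_append {A : Type*} (β w : List A) (n : ℕ) :
    wordPow β (n + 1) ++ w = β ++ (wordPow β n ++ w) :=
  List.append_assoc _ _ _

section Witness

variable {A M : Type*} [Monoid M] {β : List A} {m₁ m₂ : M} {s : List A → Option M}

theorem exists_witness_append_mul_eq {f : List A → Option M} {α : List A}
    (hdoms : ∀ w : List A, (f (α ++ w)).isSome → (s w).isSome)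
    (hw1 : ∀ (w : List A) (t : M), s w = some t → f (α ++ w) = some (m₁ * t))
    (hw2 : ∀ (w : List A) (t : M), s w = some t → f (α ++ β ++ w) = some (m₂ * t))
    {w : List A} {t : M} (ht : s w = some t) :
    ∃ t' : M, s (β ++ w) = some t' ∧ m₁ * t' = m₂ * t := by
  have hαβw : f (α ++ (β ++ w)) = some (m₂ * t) := List.append_assoc α β w ▸ hw2 w t ht
  obtain ⟨t', ht'⟩ := Option.isSome_iff_exists.mp (hdoms _ (by rw [hαβw]; rfl))
  exact ⟨t', ht', Option.some_injective _ ((hw1 _ _ ht').symm.trans hαβw)⟩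

theorem exists_witness_wordPow_append (norm : M → ℝ)
    (hmul : ∀ a b : M, norm (a * b) = norm a + norm b)
    (hstep : ∀ (w : List A) (t : M), s w = some t →
      ∃ t' : M, s (β ++ w) = some t' ∧ m₁ * t' = m₂ * t)
    (N : ℕ) {w : List A} {t : M} (ht : s w = some t) :
    ∃ tN : M, s (wordPow β N ++ w) = some tN ∧
      (N : ℝ) * (norm m₁ - norm m₂) + norm tN = norm t := by
  induction N with
  | zero => exact ⟨t, ht, by simp⟩
  | succ n ih =>
    obtain ⟨tn, htn, hnorm⟩ := ih
    obtain ⟨t', ht', hmul_eq⟩ := hstep _ _ htn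
    have hnorm_step : norm m₁ + norm t' = norm m₂ + norm tn := by
      rw [← hmul, ← hmul, hmul_eq]
    refine ⟨t', wordPow_succ_append β w n ▸ ht', ?_⟩
    push_cast
    linarith

end Witness

theorem witnessNormLe_general {A : Type*} {M : Type*} [Monoid M]
    (norm : M → ℝ)
    (hnn : ∀ a : M, 0 ≤ norm a)
    (hmul : ∀ a b : M, norm (a * b) = norm a + norm b)
    (f : List A → Option M) (α β : List A)
    (hess : ∃ w : List A, (f (α ++ w)).isSome)
    (m₁ m₂ : M) (s : List A → Option M)
    (hdoms : ∀ w : List A, (s w).isSome ↔ (f (α ++ w)).isSome)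
    (hw1 : ∀ (w : List A) (t : M), s w = some t → f (α ++ w) = some (m₁ * t))
    (hw2 : ∀ (w : List A) (t : M), s w = some t → f (α ++ β ++ w) = some (m₂ * t)) :
    (∀ N : ℕ, 1 ≤ N → ∀ (w : List A) (t tN : M),
      s w = some t → s (wordPow β N ++ w) = some tN →
      (N : ℝ) * (norm m₁ - norm m₂) + norm tN = norm t) ∧
    norm m₁ ≤ norm m₂ := by
  have hiter := exists_witness_wordPow_append norm hmul
    fun w t ht => exists_witness_append_mul_eq (fun w => (hdoms w).mpr) hw1 hw2 ht
  refine ⟨fun N _ w t tN ht htN => ?_, ?_⟩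
  · obtain ⟨tN', htN', hnorm⟩ := hiter N ht
    rwa [Option.some_injective _ (htN.symm.trans htN')]
  · obtain ⟨w, hw⟩ := hess
    obtain ⟨t, ht⟩ := Option.isSome_iff_exists.mp ((hdoms w).mpr hw)
    have hdiff : norm m₁ - norm m₂ ≤ 0 := nonpos_of_forall_nsmul_le fun N => by
      obtain ⟨tN, -, hnorm⟩ := hiter N ht
      rw [nsmul_eq_mul]
      linarith [hnn tN]
    linarith

/-- If `(m₁, m₂, s)` witnesses `α ≡_{R_f} αβ` for an `f`-essential `α`, then for
every `N ≥ 1` and every `w` with `αw ∈ dom f`,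
`N·(‖m₁‖ − ‖m₂‖) + ‖s (βᴺ w)‖ = ‖s w‖`, and consequently `‖m₁‖ ≤ ‖m₂‖`. -/
theorem witnessNormLe {A : Type*} {M : Type*} [Monoid M]
    (norm : M → ℝ)
    (hnn : ∀ a : M, 0 ≤ norm a)
    (hmul : ∀ a b : M, norm (a * b) = norm a + norm b)
    (hone : norm 1 = 0)
    (hker : ∀ a : M, norm a = 0 → a = 1)
    (f : List A → Option M) (α β : List A)
    (hess : ∃ w : List A, (f (α ++ w)).isSome)
    (m₁ m₂ : M) (s : List A → Option M)
    (hdoms : ∀ w : List A, (s w).isSome ↔ (f (α ++ w)).isSome)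
    (hdomeq : ∀ w : List A, (f (α ++ w)).isSome ↔ (f (α ++ β ++ w)).isSome)
    (hw1 : ∀ (w : List A) (t : M), s w = some t → f (α ++ w) = some (m₁ * t))
    (hw2 : ∀ (w : List A) (t : M), s w = some t → f (α ++ β ++ w) = some (m₂ * t)) :
    (∀ N : ℕ, 1 ≤ N → ∀ (w : List A) (t tN : M),
      s w = some t → s (wordPow β N ++ w) = some tN →
      (N : ℝ) * (norm m₁ - norm m₂) + norm tN = norm t) ∧
    norm m₁ ≤ norm m₂ :=
  witnessNormLe_general norm hnn hmul f α β hess m₁ m₂ s hdoms hw1 hw2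
end

section
/- Let f : Σ* → M be a partial function into a sequentiable structure and let A be a finite set of words all equivalent under R_f to a fixed word α. Then there exists a single partial function s : Σ* → M and an element m'' ∈ M such that for every β ∈ A there exists m_β ∈ M with: dom(s) = {w : αw ∈ dom(f)}, and for all w ∈ dom(s), f(βw) = m_β∘s(w) and f(αw) = m''∘s(w). -/
/-
All the `α`-factors `mα` of the given witnesses are prefixes of one value
`f (α ++ w₀)`, hence pairwise prefix-comparable in a sequentiable monoid, so the one of
largest norm is a common extension `mα * d = m` of all of them. Its witness `s` then
serves every `β`: cancelling `mα` in `mα * sβ w = f (α ++ w) = mα * d * s w` gives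
`sβ w = d * s w`, so `f (β ++ w) = (mβ * d) * s w`.
-/

section Prefix

variable {M : Type*} [Monoid M]

structure IsNormHom (norm : M → ℝ) : Prop where
  nonneg : ∀ a, 0 ≤ norm a
  map_mul : ∀ a b, norm (a * b) = norm a + norm b
  eq_one_of_eq_zero : ∀ a, norm a = 0 → a = 1

structure IsSequentiableMeet (meet : M → M → M) : Prop where
  pref_left : ∀ a b, pref (meet a b) a
  pref_right : ∀ a b, pref (meet a b) b
  pref_meet : ∀ a b c, pref c a → pref c b → pref c (meet a b)
  meet_eq_one_of_pref : ∀ a b c d, a ≠ 1 → b ≠ 1 → c ≠ 1 → d ≠ 1 →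
    pref a c → pref b d → meet a b = 1 → meet c d = 1

lemma pref_refl (a : M) : pref a a := ⟨1, mul_one a⟩

namespace IsNormHom

variable {norm : M → ℝ}

lemma eq_one_of_mul_eq_one (hN : IsNormHom norm) {a b : M} (h : a * b = 1) : a = 1 := by
  have hone : norm 1 = 0 := by
    have h11 := hN.map_mul 1 1
    rw [one_mul] at h11
    linarith
  have hab := hN.map_mul a b
  rw [h, hone] at hab
  exact hN.eq_one_of_eq_zero a (by linarith [hN.nonneg a, hN.nonneg b])

lemma eq_of_pref_of_norm_le (hN : IsNormHom norm) {a b : M} (hab : pref a b)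
    (hle : norm b ≤ norm a) : b = a := by
  obtain ⟨c, rfl⟩ := hab
  have hc : norm c = 0 := by linarith [hN.map_mul a c, hN.nonneg c]
  rw [hN.eq_one_of_eq_zero c hc, mul_one]

end IsNormHom

variable [IsLeftCancelMul M] {norm : M → ℝ} {meet : M → M → M}

lemma IsSequentiableMeet.meet_cofactors_eq_one (hP : IsSequentiableMeet meet)
    (hN : IsNormHom norm)
    {a b a' b' : M} (ha : meet a b * a' = a) (hb : meet a b * b' = b) : meet a' b' = 1 := by
  obtain ⟨k, hk⟩ := hP.pref_left a' b'
  obtain ⟨l, hl⟩ := hP.pref_right a' b'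
  obtain ⟨m, hm⟩ := hP.pref_meet a b (meet a b * meet a' b')
    ⟨k, by rw [mul_assoc, hk, ha]⟩ ⟨l, by rw [mul_assoc, hl, hb]⟩
  rw [mul_assoc] at hm
  exact hN.eq_one_of_mul_eq_one (mul_left_cancel (hm.trans (mul_one _).symm))

/-- If neither is a prefix of the other, the cofactors `a'`, `b'` of `meet a b` are coprime and
nontrivial prefixes of the common cofactor `v'` of `v`, forcing `meet v' v' = 1`, i.e. `v' = 1`. -/
lemma pref_or_pref_of_pref (hN : IsNormHom norm) (hP : IsSequentiableMeet meet)
    {a b v : M} (ha : pref a v) (hb : pref b v) : pref a b ∨ pref b a := by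
  by_contra! hcon
  obtain ⟨hab, hba⟩ := hcon
  obtain ⟨a', ha'⟩ := hP.pref_left a b
  obtain ⟨b', hb'⟩ := hP.pref_right a b
  obtain ⟨x, hx⟩ := ha
  obtain ⟨y, hy⟩ := hb
  have ha'1 : a' ≠ 1 := by
    rintro rfl
    exact hab ((mul_one _).symm.trans ha' ▸ hP.pref_right a b)
  have hb'1 : b' ≠ 1 := by
    rintro rfl
    exact hba ((mul_one _).symm.trans hb' ▸ hP.pref_left a b)
  have hxy : b' * y = a' * x :=
    mul_left_cancel (a := meet a b) (by rw [← mul_assoc, hb', hy, ← mul_assoc, ha', hx])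
  have hv1 : a' * x ≠ 1 := fun h => ha'1 (hN.eq_one_of_mul_eq_one h)
  have hmeet := hP.meet_eq_one_of_pref a' b' (a' * x) (a' * x) ha'1 hb'1 hv1 hv1 ⟨x, rfl⟩ ⟨y, hxy⟩
    (hP.meet_cofactors_eq_one hN ha' hb')
  obtain ⟨k, hk⟩ := hP.pref_meet _ _ _ (pref_refl (a' * x)) (pref_refl (a' * x))
  rw [hmeet] at hk
  exact hv1 (hN.eq_one_of_mul_eq_one hk)

lemma pref_of_pref_of_norm_le (hN : IsNormHom norm) (hP : IsSequentiableMeet meet)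
    {a b v : M} (ha : pref a v) (hb : pref b v) (hle : norm a ≤ norm b) : pref a b := by
  rcases pref_or_pref_of_pref hN hP ha hb with hab | hba
  · exact hab
  · exact hN.eq_of_pref_of_norm_le hba hle ▸ pref_refl a

end Prefix

section Witness

variable {A M : Type*} [Monoid M] [IsLeftCancelMul M] {f : List A → Option M} {α β : List A}
  {mβ mα m : M} {sβ s : List A → Option M}

lemma witness_of_mul_eq (hdomβ : ∀ w, (sβ w).isSome ↔ (f (α ++ w)).isSome)
    (hβ : ∀ w t, sβ w = some t → f (β ++ w) = some (mβ * t) ∧ f (α ++ w) = some (mα * t))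
    (hs : ∀ w t, s w = some t → f (α ++ w) = some (m * t)) {d : M} (hd : mα * d = m)
    (w : List A) (t : M) (hwt : s w = some t) : f (β ++ w) = some (mβ * d * t) := by
  have hfα := hs w t hwt
  obtain ⟨u, hu⟩ := Option.isSome_iff_exists.mp ((hdomβ w).mpr (by simp [hfα]))
  obtain ⟨hfβ, hfα'⟩ := hβ w u hu
  have hud : u = d * t :=
    mul_left_cancel (Option.some.inj (hfα'.symm.trans (by rw [hfα, ← hd, mul_assoc])))
  rw [hfβ, hud, mul_assoc]

lemma exists_witness_of_norm_le {norm : M → ℝ} {meet : M → M → M}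
    (hN : IsNormHom norm) (hP : IsSequentiableMeet meet)
    (hdomβ : ∀ w, (sβ w).isSome ↔ (f (α ++ w)).isSome)
    (hβ : ∀ w t, sβ w = some t → f (β ++ w) = some (mβ * t) ∧ f (α ++ w) = some (mα * t))
    (hs : ∀ w t, s w = some t → f (α ++ w) = some (m * t)) (hle : norm mα ≤ norm m) :
    ∃ mβ' : M, ∀ w t, s w = some t → f (β ++ w) = some (mβ' * t) := by
  by_cases hne : ∃ w t, s w = some t
  · obtain ⟨w₀, t₀, hw₀⟩ := hne
    obtain ⟨u₀, hu₀⟩ := Option.isSome_iff_exists.mp ((hdomβ w₀).mpr (by simp [hs w₀ t₀ hw₀]))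
    have hv : mα * u₀ = m * t₀ := Option.some.inj ((hβ w₀ u₀ hu₀).2.symm.trans (hs w₀ t₀ hw₀))
    obtain ⟨d, hd⟩ := pref_of_pref_of_norm_le hN hP ⟨u₀, hv⟩ ⟨t₀, rfl⟩ hle
    exact ⟨mβ * d, witness_of_mul_eq hdomβ hβ hs hd⟩
  · exact ⟨1, fun w t hwt => (hne ⟨w, t, hwt⟩).elim⟩

end Witness

theorem uniformWitness_general {A : Type*} {M : Type*} [Monoid M]
    (norm : M → ℝ) (meet : M → M → M)
    (hlc : ∀ a b c : M, a * b = a * c → b = c)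
    (hnn : ∀ a : M, 0 ≤ norm a)
    (hmul : ∀ a b : M, norm (a * b) = norm a + norm b)
    (hker : ∀ a : M, norm a = 0 → a = 1)
    (hm1 : ∀ a b : M, pref (meet a b) a)
    (hm2 : ∀ a b : M, pref (meet a b) b)
    (hm3 : ∀ a b c : M, pref c a → pref c b → pref c (meet a b))
    (hseq : ∀ a b c d : M, a ≠ 1 → b ≠ 1 → c ≠ 1 → d ≠ 1 →
      pref a c → pref b d → meet a b = 1 → meet c d = 1)
    (f : List A → Option M) (α : List A) (B : Finset (List A))
    (hwit : ∀ β ∈ B, ∃ (mβ mα : M) (sβ : List A → Option M),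
      (∀ w : List A, (sβ w).isSome ↔ (f (α ++ w)).isSome) ∧
      (∀ w : List A, (f (β ++ w)).isSome ↔ (f (α ++ w)).isSome) ∧
      (∀ (w : List A) (t : M), sβ w = some t →
        f (β ++ w) = some (mβ * t) ∧ f (α ++ w) = some (mα * t))) :
    ∃ (s : List A → Option M) (m'' : M),
      (∀ w : List A, (s w).isSome ↔ (f (α ++ w)).isSome) ∧
      (∀ (w : List A) (t : M), s w = some t → f (α ++ w) = some (m'' * t)) ∧
      (∀ β ∈ B, ∃ mβ : M, ∀ (w : List A) (t : M), s w = some t →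
        f (β ++ w) = some (mβ * t)) := by
  have : IsLeftCancelMul M := ⟨fun a b c => hlc a b c⟩
  have hN : IsNormHom norm := ⟨hnn, hmul, hker⟩
  have hP : IsSequentiableMeet meet := ⟨hm1, hm2, hm3, hseq⟩
  rcases B.eq_empty_or_nonempty with rfl | hB
  · exact ⟨fun w => f (α ++ w), 1, fun _ => Iff.rfl, fun _ _ h => by simpa using h, by simp⟩
  choose! mβ mα s hdom _ hs using hwit
  obtain ⟨β₀, hβ₀, hmax⟩ := B.exists_max_image (fun β => norm (mα β)) hB
  have hs₀ : ∀ w t, s β₀ w = some t → f (α ++ w) = some (mα β₀ * t) :=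
    fun w t h => (hs β₀ hβ₀ w t h).2
  exact ⟨s β₀, mα β₀, hdom β₀ hβ₀, hs₀, fun β hβ =>
    exists_witness_of_norm_le hN hP (hdom β hβ) (hs β hβ) hs₀ (hmax β hβ)⟩

/-- For a finite set `B` of words all `R_f`-equivalent to a fixed word `α` (each
with its own witness), there is a single partial function `s` and an element `m''`
serving as a uniform witness for all `β ∈ B`. -/
theorem uniformWitness {A : Type*} [DecidableEq A] {M : Type*} [Monoid M]
    (norm : M → ℝ) (meet : M → M → M)
    (hlc : ∀ a b c : M, a * b = a * c → b = c)
    (hnn : ∀ a : M, 0 ≤ norm a)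
    (hmul : ∀ a b : M, norm (a * b) = norm a + norm b)
    (hone : norm 1 = 0)
    (hker : ∀ a : M, norm a = 0 → a = 1)
    (hm1 : ∀ a b : M, pref (meet a b) a)
    (hm2 : ∀ a b : M, pref (meet a b) b)
    (hm3 : ∀ a b c : M, pref c a → pref c b → pref c (meet a b))
    (hseq : ∀ a b c d : M, a ≠ 1 → b ≠ 1 → c ≠ 1 → d ≠ 1 →
      pref a c → pref b d → meet a b = 1 → meet c d = 1)
    (f : List A → Option M) (α : List A) (B : Finset (List A))
    (hwit : ∀ β ∈ B, ∃ (mβ mα : M) (sβ : List A → Option M),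
      (∀ w : List A, (sβ w).isSome ↔ (f (α ++ w)).isSome) ∧
      (∀ w : List A, (f (β ++ w)).isSome ↔ (f (α ++ w)).isSome) ∧
      (∀ (w : List A) (t : M), sβ w = some t →
        f (β ++ w) = some (mβ * t) ∧ f (α ++ w) = some (mα * t))) :
    ∃ (s : List A → Option M) (m'' : M),
      (∀ w : List A, (s w).isSome ↔ (f (α ++ w)).isSome) ∧
      (∀ (w : List A) (t : M), s w = some t → f (α ++ w) = some (m'' * t)) ∧
      (∀ β ∈ B, ∃ mβ : M, ∀ (w : List A) (t : M), s w = some t →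
        f (β ++ w) = some (mβ * t)) :=
  uniformWitness_general norm meet hlc hnn hmul hker hm1 hm2 hm3 hseq f α B hwit
end

section
/- Let T be a monoidal subsequential finite-state transducer and let O_T be its output function. Then the Myhill–Nerode relation of O_T has finite index, bounded by the number of states of T plus one. -/
/-- Generalized transition function of a subsequential transducer. -/
def dstar {A Q : Type*} (δ : Q → A → Option Q) : Q → List A → Option Q
  | q, [] => some q
  | q, a :: w =>
    match δ q a with
    | some q' => dstar δ q' w
    | none => none

/-- Generalized transition output function (only meaningful where `dstar` is defined). -/
def lstar {A Q M : Type*} [Monoid M] (δ : Q → A → Option Q) (lam : Q → A → M) :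
    Q → List A → M
  | _, [] => 1
  | q, a :: w =>
    match δ q a with
    | some q' => lam q a * lstar δ lam q' w
    | none => 1

/-- The output function of a monoidal subsequential finite-state transducer. -/
def OT {A Q M : Type*} [Monoid M] [DecidableEq Q]
    (q0 : Q) (F : Finset Q) (δ : Q → A → Option Q) (lam : Q → A → M)
    (iota : M) (Psi : Q → M) (w : List A) : Option M :=
  match dstar δ q0 w with
  | some q => if q ∈ F then some (iota * lstar δ lam q0 w * Psi q) else none
  | none => none

/-- The Myhill–Nerode relation of a partial function `f : Σ* → M` into a monoid. -/
def MNRel {A M : Type*} [Monoid M] (f : List A → Option M) (u v : List A) : Prop :=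
  ∃ (u' v' : M) (s : List A → Option M),
    ∀ w : List A,
      ((f (u ++ w)).isSome ↔ (f (v ++ w)).isSome) ∧
      ((s w).isSome ↔ (f (u ++ w)).isSome) ∧
      ((f (u ++ w)).isSome →
        ∃ t : M, s w = some t ∧ f (u ++ w) = some (u' * t) ∧ f (v ++ w) = some (v' * t))


/-!
Two words that drive the transducer from `q0` to the same state (or both out of the
automaton) are Myhill–Nerode equivalent: their outputs on every continuation `w` are the
common residual output of that state on `w`, prefixed by their respective outputs so far.
Hence the relation is coarser than the kernel of `u ↦ δ*(q0, u) : Σ* → Option Q`, and its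
classes are at most `|Q| + 1` many.
-/

theorem Quot.finite_and_card_le_of_ker_le {α β : Type*} [Finite β] {r : α → α → Prop}
    (h : α → β) (hr : ∀ a b, h a = h b → r a b) :
    Finite (Quot r) ∧ Nat.card (Quot r) ≤ Nat.card β := by
  let kerLift : Quot (fun a b => h a = h b) → β := Quot.lift h fun _ _ => id
  have h_inj : Function.Injective kerLift := by
    rintro ⟨a⟩ ⟨b⟩ hab
    exact Quot.sound hab
  have h_surj : Function.Surjective (Quot.map id fun a b => hr a b) :=
    Quot.map_surjective _ Function.surjective_id
  have : Finite (Quot fun a b => h a = h b) := Finite.of_injective kerLift h_inj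
  exact ⟨Finite.of_surjective _ h_surj,
    (Nat.card_le_card_of_surjective _ h_surj).trans (Nat.card_le_card_of_injective _ h_inj)⟩

theorem MNRel.of_eq_map {A M : Type*} [Monoid M] {f : List A → Option M} {u v : List A}
    (u' v' : M) (s : List A → Option M)
    (hu : ∀ w, f (u ++ w) = (s w).map (u' * ·)) (hv : ∀ w, f (v ++ w) = (s w).map (v' * ·)) :
    MNRel f u v := by
  refine ⟨u', v', s, fun w => ?_⟩
  rw [hu, hv]
  cases s w <;> simp

section Transducer

variable {A Q M : Type*} [Monoid M] (δ : Q → A → Option Q) (lam : Q → A → M)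

theorem dstar_append (q : Q) (u w : List A) :
    dstar δ q (u ++ w) = (dstar δ q u).bind (dstar δ · w) := by
  induction u generalizing q with
  | nil => rfl
  | cons a u ih =>
    simp only [List.cons_append, dstar]
    cases δ q a with
    | some q' => exact ih q'
    | none => rfl

theorem lstar_append {q p : Q} {u : List A} (h : dstar δ q u = some p) (w : List A) :
    lstar δ lam q (u ++ w) = lstar δ lam q u * lstar δ lam p w := by
  induction u generalizing q with
  | nil =>
    cases h
    simp [lstar]
  | cons a u ih =>
    simp only [dstar] at h
    simp only [List.cons_append, lstar]
    cases hq : δ q a with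
    | some q' =>
      rw [hq] at h
      simp only [ih h, mul_assoc]
    | none => simp [hq] at h

variable [DecidableEq Q]

def residualOutput (F : Finset Q) (Psi : Q → M) (q : Q) (w : List A) : Option M :=
  match dstar δ q w with
  | some p => if p ∈ F then some (lstar δ lam q w * Psi p) else none
  | none => none

theorem OT_append_of_dstar_eq_some {q0 q : Q} (F : Finset Q) (iota : M) (Psi : Q → M)
    {u : List A} (hu : dstar δ q0 u = some q) (w : List A) :
    OT q0 F δ lam iota Psi (u ++ w) =
      (residualOutput δ lam F Psi q w).map (iota * lstar δ lam q0 u * ·) := by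
  have hdu : dstar δ q0 (u ++ w) = dstar δ q w := by simp [dstar_append, hu]
  unfold OT residualOutput
  rw [hdu, lstar_append δ lam hu]
  cases dstar δ q w with
  | none => rfl
  | some p => dsimp only; split_ifs <;> simp [mul_assoc]

theorem OT_append_of_dstar_eq_none {q0 : Q} (F : Finset Q) (iota : M) (Psi : Q → M)
    {u : List A} (hu : dstar δ q0 u = none) (w : List A) :
    OT q0 F δ lam iota Psi (u ++ w) = none := by
  simp [OT, dstar_append, hu]

theorem MNRel_OT_of_dstar_eq (q0 : Q) (F : Finset Q) (iota : M) (Psi : Q → M)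
    {u v : List A} (h : dstar δ q0 u = dstar δ q0 v) :
    MNRel (OT q0 F δ lam iota Psi) u v := by
  cases hu : dstar δ q0 u with
  | none =>
    rw [hu] at h
    exact MNRel.of_eq_map 1 1 (fun _ => none)
      (by simp [OT_append_of_dstar_eq_none δ lam F iota Psi hu])
      (by simp [OT_append_of_dstar_eq_none δ lam F iota Psi h.symm])
  | some q =>
    rw [hu] at h
    exact MNRel.of_eq_map _ _ (residualOutput δ lam F Psi q)
      (OT_append_of_dstar_eq_some δ lam F iota Psi hu)
      (OT_append_of_dstar_eq_some δ lam F iota Psi h.symm)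

end Transducer

/-- The Myhill–Nerode relation of the output function of a subsequential transducer
has finite index, bounded by the number of states plus one. -/
theorem transducerFiniteIndex {A : Type*} {M : Type*} [Monoid M]
    {Q : Type*} [Fintype Q] [DecidableEq Q]
    (q0 : Q) (F : Finset Q) (δ : Q → A → Option Q) (lam : Q → A → M)
    (iota : M) (Psi : Q → M) :
    Finite (Quot (MNRel (OT q0 F δ lam iota Psi))) ∧
    Nat.card (Quot (MNRel (OT q0 F δ lam iota Psi))) ≤ Fintype.card Q + 1 := by
  obtain ⟨h_finite, h_card⟩ := Quot.finite_and_card_le_of_ker_le (dstar δ q0)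
    fun _ _ => MNRel_OT_of_dstar_eq δ lam q0 F iota Psi
  exact ⟨h_finite, by simpa [Nat.card_eq_fintype_card] using h_card⟩
end
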